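/- arXiv:1201.1992 — 2 statements merged into one kernel-verified Lean document; each statement's English description precedes it below -/
import Mathlib

section
/- Every rational pseudodifferential operator over a differential field K of characteristic zero can be written as a right fraction A S⁻¹ with A, S ∈ K[∂], S ≠ 0; in other words, the set {A S⁻¹ : A, S ∈ K[∂], S ≠ 0} is a subskewfield of K((∂⁻¹)) and equals the smallest subskewfield of K((∂⁻¹)) containing K[∂]. -/
/-- An axiomatization of the ring `R((∂⁻¹))` of pseudodifferential operators over a
commutative differential ring `(R, δ)`: elements are determined by their coefficients
`coeff A : ℤ → R` (supported in a half-line `n ≤ N`), with the product determined by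
`∂ⁿ ∘ a = Σ_{j≥0} binom(n,j) δʲ(a) ∂^{n-j}`, equivalently by the symbol formula
`coeff (A∘B) k = Σ_{m+n-j=k} binom(m,j) aₘ δʲ(bₙ)`. -/
structure PseudoDiffOps (R : Type) [CommRing R] (δ : R → R) : Type 1 where
  carrier : Type
  [ringCarrier : Ring carrier]
  /-- the embedding of `R` as the operators of order `≤ 0` with only a constant term -/
  const : R →+* carrier
  /-- the derivation `∂` as an element of the ring -/
  d : carrier
  /-- the element `∂⁻¹` -/
  dinv : carrier
  δ_add : ∀ a b : R, δ (a + b) = δ a + δ b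
  δ_leibniz : ∀ a b : R, δ (a * b) = δ a * b + a * δ b
  /-- `coeff A n` is the coefficient of `∂ⁿ` in `A` -/
  coeff : carrier → ℤ → R
  coeff_injective : Function.Injective coeff
  coeff_add : ∀ A B n, coeff (A + B) n = coeff A n + coeff B n
  coeff_one : ∀ n, coeff 1 n = if n = 0 then 1 else 0
  coeff_const : ∀ (a : R) (n), coeff (const a) n = if n = 0 then a else 0
  coeff_d : ∀ n, coeff d n = if n = 1 then 1 else 0
  coeff_dinv : ∀ n, coeff dinv n = if n = -1 then 1 else 0
  d_dinv : d * dinv = 1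
  dinv_d : dinv * d = 1
  coeff_bddAbove : ∀ A, ∃ N : ℤ, ∀ n, N < n → coeff A n = 0
  exists_of_coeffs : ∀ f : ℤ → R, (∃ N : ℤ, ∀ n, N < n → f n = 0) → ∃ A, coeff A = f
  coeff_mul : ∀ (A B : carrier) (NA NB k : ℤ),
    (∀ n, NA < n → coeff A n = 0) → (∀ n, NB < n → coeff B n = 0) →
    coeff (A * B) k =
      ∑ m ∈ Finset.Icc (k - NB) NA, ∑ j ∈ Finset.range ((NB - k + m).toNat + 1),
        ((Ring.choose m j : ℤ) : R) * (coeff A m * δ^[j] (coeff B (k + j - m)))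

attribute [instance] PseudoDiffOps.ringCarrier

namespace PseudoDiffOps

variable {R : Type} [CommRing R] {δ : R → R} (P : PseudoDiffOps R δ)

/-- the order of a pseudodifferential operator: the largest `n` with `coeff A n ≠ 0`
(junk value for `A = 0`). -/
noncomputable def ord (A : P.carrier) : ℤ := sSup {n : ℤ | P.coeff A n ≠ 0}

/-- the leading coefficient of a pseudodifferential operator -/
noncomputable def leadCoeff (A : P.carrier) : R := P.coeff A (P.ord A)

/-- `A` is a differential operator, i.e. lies in `R[∂] ⊆ R((∂⁻¹))` -/
def IsDiffOp (A : P.carrier) : Prop := ∀ n : ℤ, n < 0 → P.coeff A n = 0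

/-- `A` is monic, i.e. has leading coefficient `1` -/
noncomputable def Monic (A : P.carrier) : Prop := P.leadCoeff A = 1

end PseudoDiffOps

/-- a subset of `K((∂⁻¹))` is a subskewfield if it is a subring closed under taking
inverses of its nonzero elements -/
def PseudoDiffOps.IsSubskewfield {K : Type} [CommRing K] {δ : K → K}
    (P : PseudoDiffOps K δ) (S : Set P.carrier) : Prop :=
  (0 : P.carrier) ∈ S ∧ (1 : P.carrier) ∈ S ∧
  (∀ x ∈ S, ∀ y ∈ S, x + y ∈ S) ∧ (∀ x ∈ S, -x ∈ S) ∧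
  (∀ x ∈ S, ∀ y ∈ S, x * y ∈ S) ∧
  (∀ x ∈ S, x ≠ 0 → ∃ y ∈ S, x * y = 1 ∧ y * x = 1)

/-- the set of right fractions `A S⁻¹` with `A, S ∈ K[∂]`, `S ≠ 0` -/
noncomputable def PseudoDiffOps.rightFractions {K : Type} [CommRing K] {δ : K → K}
    (P : PseudoDiffOps K δ) : Set P.carrier :=
  {x : P.carrier | ∃ A S : P.carrier,
    P.IsDiffOp A ∧ P.IsDiffOp S ∧ S ≠ 0 ∧ x = A * Ring.inverse S}


/-!
Every nonzero `X ∈ K((∂⁻¹))` has a right inverse, built coefficient by coefficient: the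
`r`-th correction fixes the coefficient of `∂^(-r)` in `X Y` using the leading coefficient
of `X`; a right inverse in a ring without zero divisors is two-sided. Cancelling leading
terms gives division with remainder in `K[∂]`, and the Euclidean algorithm then yields the
right Ore condition: for `a, s ∈ K[∂]`, `s ≠ 0`, there are `b, t ∈ K[∂]`, `t ≠ 0`, with
`a t = s b`. In a ring whose nonzero elements are units, this makes the right fractions of a
subring closed under sums (`a s⁻¹ + b t⁻¹ = (a c + b d) (s c)⁻¹` when `s c = t d`) and
products (`s⁻¹ b = d c⁻¹` when `b c = s d`); inverses are clear, and every subskewfield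
containing the subring contains all its right fractions.
-/

namespace Subring

variable {D : Type*} [Ring D] (R : Subring D)

def IsRightOre : Prop :=
  ∀ a ∈ R, ∀ s ∈ R, s ≠ 0 → ∃ b ∈ R, ∃ t ∈ R, t ≠ 0 ∧ a * t = s * b

def rightFractions : Set D :=
  {x | ∃ a s, a ∈ R ∧ s ∈ R ∧ s ≠ 0 ∧ x = a * Ring.inverse s}

variable {R}

lemma subset_rightFractions [Nontrivial D] : (R : Set D) ⊆ R.rightFractions :=
  fun a ha => ⟨a, 1, ha, R.one_mem, one_ne_zero, by rw [Ring.inverse_one, mul_one]⟩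

lemma neg_mem_rightFractions {x : D} (hx : x ∈ R.rightFractions) :
    -x ∈ R.rightFractions := by
  obtain ⟨a, s, ha, hs, hs0, rfl⟩ := hx
  exact ⟨-a, s, R.neg_mem ha, hs, hs0, (neg_mul a _).symm⟩

lemma rightFractions_subset {T : Set D} (hmul : ∀ x ∈ T, ∀ y ∈ T, x * y ∈ T)
    (hinv : ∀ x ∈ T, x ≠ 0 → ∃ y ∈ T, x * y = 1 ∧ y * x = 1)
    (hRT : (R : Set D) ⊆ T) :
    R.rightFractions ⊆ T := by
  rintro _ ⟨a, s, ha, hs, hs0, rfl⟩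
  obtain ⟨y, hy, hsy, hys⟩ := hinv s (hRT hs) hs0
  have : Ring.inverse s = y := Ring.inverse_unit ⟨s, y, hsy, hys⟩
  exact this ▸ hmul a (hRT ha) y hy

lemma add_mem_rightFractions (hD : ∀ x : D, x ≠ 0 → IsUnit x) (hR : R.IsRightOre) {x y : D}
    (hx : x ∈ R.rightFractions) (hy : y ∈ R.rightFractions) : x + y ∈ R.rightFractions := by
  obtain ⟨a, s, ha, hs, hs0, rfl⟩ := hx
  obtain ⟨b, t, hb, ht, ht0, rfl⟩ := hy
  obtain ⟨d, hd, c, hc, hc0, hsc⟩ := hR s hs t ht ht0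
  have hsc0 : s * c ≠ 0 := (hD s hs0).mul_right_eq_zero.not.mpr hc0
  refine ⟨a * c + b * d, s * c, R.add_mem (R.mul_mem ha hc) (R.mul_mem hb hd),
    R.mul_mem hs hc, hsc0, ?_⟩
  rw [Ring.eq_mul_inverse_iff_mul_eq _ _ _ (hD _ hsc0), add_mul, mul_assoc, mul_assoc,
    Ring.inverse_mul_cancel_left _ _ (hD _ hs0), hsc,
    Ring.inverse_mul_cancel_left _ _ (hD _ ht0)]

lemma mul_mem_rightFractions (hD : ∀ x : D, x ≠ 0 → IsUnit x) (hR : R.IsRightOre) {x y : D}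
    (hx : x ∈ R.rightFractions) (hy : y ∈ R.rightFractions) : x * y ∈ R.rightFractions := by
  obtain ⟨a, s, ha, hs, hs0, rfl⟩ := hx
  obtain ⟨b, t, hb, ht, ht0, rfl⟩ := hy
  obtain ⟨d, hd, c, hc, hc0, hbc⟩ := hR b hb s hs hs0
  have htc0 : t * c ≠ 0 := (hD t ht0).mul_right_eq_zero.not.mpr hc0
  refine ⟨a * d, t * c, R.mul_mem ha hd, R.mul_mem ht hc, htc0, ?_⟩
  rw [Ring.eq_mul_inverse_iff_mul_eq _ _ _ (hD _ htc0)]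
  simp only [mul_assoc, Ring.inverse_mul_cancel_left _ _ (hD _ ht0), hbc,
    Ring.inverse_mul_cancel_left _ _ (hD _ hs0)]

lemma exists_inv_mem_rightFractions (hD : ∀ x : D, x ≠ 0 → IsUnit x) {x : D}
    (hx : x ∈ R.rightFractions) (hx0 : x ≠ 0) :
    ∃ y ∈ R.rightFractions, x * y = 1 ∧ y * x = 1 := by
  obtain ⟨a, s, ha, hs, hs0, rfl⟩ := hx
  have ha0 : a ≠ 0 := by rintro rfl; exact hx0 (zero_mul _)
  refine ⟨s * Ring.inverse a, ⟨s, a, hs, ha, ha0, rfl⟩, ?_, ?_⟩ <;>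
    simp only [mul_assoc, Ring.inverse_mul_cancel_left _ _ (hD _ hs0),
      Ring.inverse_mul_cancel_left _ _ (hD _ ha0), Ring.mul_inverse_cancel _ (hD _ hs0),
      Ring.mul_inverse_cancel _ (hD _ ha0)]

end Subring

namespace PseudoDiffOps

section CommRing

variable {R : Type} [CommRing R] {δ : R → R} (P : PseudoDiffOps R δ)

lemma coeff_zero (n : ℤ) : P.coeff 0 n = 0 := by
  simpa using P.coeff_add 0 0 n

lemma coeff_neg (A : P.carrier) (n : ℤ) : P.coeff (-A) n = -P.coeff A n := by
  have h := P.coeff_add A (-A) n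
  rw [add_neg_cancel, P.coeff_zero] at h
  linear_combination -h

lemma coeff_sub (A B : P.carrier) (n : ℤ) :
    P.coeff (A - B) n = P.coeff A n - P.coeff B n := by
  rw [sub_eq_add_neg, P.coeff_add, P.coeff_neg, sub_eq_add_neg]

instance [Nontrivial R] : Nontrivial P.carrier :=
  ⟨⟨1, 0, fun h => by simpa [P.coeff_one, P.coeff_zero] using congrArg (P.coeff · 0) h⟩⟩

noncomputable def ofCoeffs (f : ℤ → R) (hf : ∃ N : ℤ, ∀ n, N < n → f n = 0) :
    P.carrier :=
  Classical.choose (P.exists_of_coeffs f hf)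

lemma coeff_ofCoeffs (f : ℤ → R) (hf : ∃ N : ℤ, ∀ n, N < n → f n = 0) :
    P.coeff (P.ofCoeffs f hf) = f :=
  Classical.choose_spec (P.exists_of_coeffs f hf)

/-- the operator `c ∂ⁿ` -/
noncomputable def monomial (n : ℤ) (c : R) : P.carrier :=
  P.ofCoeffs (fun m => if m = n then c else 0) ⟨n, fun _ hm => if_neg hm.ne'⟩

lemma coeff_monomial (n : ℤ) (c : R) (m : ℤ) :
    P.coeff (P.monomial n c) m = if m = n then c else 0 := by
  rw [monomial, coeff_ofCoeffs]

lemma coeff_mul_of_add_eq {A B : P.carrier} {M N k : ℤ} (hA : ∀ n, M < n → P.coeff A n = 0)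
    (hB : ∀ n, N < n → P.coeff B n = 0) (hk : M + N = k) :
    P.coeff (A * B) k = P.coeff A M * P.coeff B N := by
  subst hk
  rw [P.coeff_mul A B M N _ hA hB, add_sub_cancel_right, Finset.Icc_self, Finset.sum_singleton,
    show (N - (M + N) + M).toNat = 0 by omega, Finset.sum_range_one, Ring.choose_zero_right,
    show M + N + ((0 : ℕ) : ℤ) - M = N by omega]
  simp

lemma coeff_mul_of_add_lt {A B : P.carrier} {M N k : ℤ} (hA : ∀ n, M < n → P.coeff A n = 0)
    (hB : ∀ n, N < n → P.coeff B n = 0) (hk : M + N < k) : P.coeff (A * B) k = 0 := by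
  rw [P.coeff_mul A B M N k hA hB, Finset.Icc_eq_empty (by omega), Finset.sum_empty]

lemma bddAbove_support (A : P.carrier) : BddAbove {n | P.coeff A n ≠ 0} := by
  obtain ⟨N, hN⟩ := P.coeff_bddAbove A
  exact ⟨N, fun n hn => not_lt.mp fun h => hn (hN n h)⟩

lemma coeff_eq_zero_of_ord_lt {A : P.carrier} {n : ℤ} (hn : P.ord A < n) : P.coeff A n = 0 :=
  not_not.mp fun h => hn.not_ge (le_csSup (P.bddAbove_support A) h)

lemma coeff_ord_ne_zero {A : P.carrier} (hA : A ≠ 0) : P.coeff A (P.ord A) ≠ 0 := by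
  have hsupp : ∃ n, P.coeff A n ≠ 0 := by
    by_contra! h
    exact hA (P.coeff_injective (funext fun n => by rw [h n, P.coeff_zero]))
  exact Int.csSup_mem hsupp (P.bddAbove_support A)

lemma leadCoeff_ne_zero {A : P.carrier} (hA : A ≠ 0) : P.leadCoeff A ≠ 0 :=
  P.coeff_ord_ne_zero hA

lemma ord_eq_of_coeff {A : P.carrier} {N : ℤ} (hN : P.coeff A N ≠ 0)
    (h : ∀ n, N < n → P.coeff A n = 0) : P.ord A = N :=
  le_antisymm (csSup_le ⟨N, hN⟩ fun n hn => not_lt.mp fun hlt => hn (h n hlt))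
    (le_csSup (P.bddAbove_support A) hN)

lemma ord_sub_lt_of_leadCoeff_eq {A B : P.carrier} (hAB : A - B ≠ 0) (hord : P.ord A = P.ord B)
    (hlead : P.leadCoeff A = P.leadCoeff B) : P.ord (A - B) < P.ord A := by
  refine lt_of_not_ge fun hle => P.coeff_ord_ne_zero hAB ?_
  rw [P.coeff_sub]
  rcases hle.eq_or_lt with heq | hlt
  · rw [leadCoeff, leadCoeff, ← hord] at hlead
    rw [← heq, hlead, sub_self]
  · rw [P.coeff_eq_zero_of_ord_lt hlt, P.coeff_eq_zero_of_ord_lt (hord ▸ hlt), sub_zero]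

lemma ord_monomial {n : ℤ} {c : R} (hc : c ≠ 0) : P.ord (P.monomial n c) = n :=
  P.ord_eq_of_coeff (by rwa [coeff_monomial, if_pos rfl])
    fun m hm => by rw [coeff_monomial, if_neg hm.ne']

lemma leadCoeff_monomial {n : ℤ} {c : R} (hc : c ≠ 0) : P.leadCoeff (P.monomial n c) = c := by
  rw [leadCoeff, P.ord_monomial hc, coeff_monomial, if_pos rfl]

lemma coeff_mul_ord_add_ord (A B : P.carrier) :
    P.coeff (A * B) (P.ord A + P.ord B) = P.leadCoeff A * P.leadCoeff B :=
  P.coeff_mul_of_add_eq (fun _ => P.coeff_eq_zero_of_ord_lt)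
    (fun _ => P.coeff_eq_zero_of_ord_lt) rfl

section NoZeroDivisors

variable [NoZeroDivisors R]

instance : NoZeroDivisors P.carrier where
  eq_zero_or_eq_zero_of_mul_eq_zero := by
    intro A B h
    by_contra! hAB
    have := P.coeff_mul_ord_add_ord A B
    rw [h, P.coeff_zero] at this
    exact mul_ne_zero (P.coeff_ord_ne_zero hAB.1) (P.coeff_ord_ne_zero hAB.2) this.symm

lemma ord_mul {A B : P.carrier} (hA : A ≠ 0) (hB : B ≠ 0) :
    P.ord (A * B) = P.ord A + P.ord B :=
  P.ord_eq_of_coeff (by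
      rw [P.coeff_mul_ord_add_ord]
      exact mul_ne_zero (P.coeff_ord_ne_zero hA) (P.coeff_ord_ne_zero hB))
    fun _ => P.coeff_mul_of_add_lt (fun _ => P.coeff_eq_zero_of_ord_lt)
      (fun _ => P.coeff_eq_zero_of_ord_lt)

lemma leadCoeff_mul {A B : P.carrier} (hA : A ≠ 0) (hB : B ≠ 0) :
    P.leadCoeff (A * B) = P.leadCoeff A * P.leadCoeff B := by
  rw [leadCoeff, P.ord_mul hA hB, P.coeff_mul_ord_add_ord]

end NoZeroDivisors

lemma isDiffOp_mul {A B : P.carrier} (hA : P.IsDiffOp A) (hB : P.IsDiffOp B) :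
    P.IsDiffOp (A * B) := by
  intro k hk
  have hδ : ∀ j, δ^[j] (0 : R) = 0 :=
    Function.iterate_fixed (by simpa using P.δ_add 0 0)
  obtain ⟨NA, hNA⟩ := P.coeff_bddAbove A
  obtain ⟨NB, hNB⟩ := P.coeff_bddAbove B
  rw [P.coeff_mul A B (max NA 0) (max NB 0) k (fun n hn => hNA n (by omega))
    (fun n hn => hNB n (by omega))]
  refine Finset.sum_eq_zero fun m _ => Finset.sum_eq_zero fun j hj => ?_
  rcases lt_or_ge m 0 with hm | hm
  · rw [hA m hm, zero_mul, mul_zero]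
  rcases lt_or_ge (j : ℤ) (m - k) with hjm | hjm
  · rw [hB _ (by omega), hδ, mul_zero, mul_zero]
  · lift m to ℕ using hm
    rw [Ring.choose_natCast, Nat.choose_eq_zero_of_lt (by omega)]
    simp

def diffOps : Subring P.carrier where
  carrier := {A | P.IsDiffOp A}
  zero_mem' _ _ := P.coeff_zero _
  one_mem' n hn := by rw [P.coeff_one, if_neg hn.ne]
  add_mem' hA hB n hn := by rw [P.coeff_add, hA n hn, hB n hn, add_zero]
  neg_mem' hA n hn := by rw [P.coeff_neg, hA n hn, neg_zero]
  mul_mem' := P.isDiffOp_mul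

lemma coe_diffOps : (P.diffOps : Set P.carrier) = {A | P.IsDiffOp A} := rfl

lemma monomial_mem_diffOps {n : ℤ} (hn : 0 ≤ n) (c : R) : P.monomial n c ∈ P.diffOps :=
  fun m hm => by rw [coeff_monomial, if_neg (by omega)]

lemma ord_nonneg {A : P.carrier} (hA : A ∈ P.diffOps) (hA0 : A ≠ 0) : 0 ≤ P.ord A :=
  not_lt.mp fun h => P.coeff_ord_ne_zero hA0 (hA _ h)

lemma rightFractions_eq_diffOps_rightFractions :
    P.rightFractions = P.diffOps.rightFractions :=
  rfl

end CommRing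

section Field

variable {K : Type} [Field K] {δ : K → K} (P : PseudoDiffOps K δ)

lemma exists_ord_sub_mul_lt {s a : P.carrier} (hs0 : s ≠ 0) (ha0 : a ≠ 0)
    (hle : P.ord s ≤ P.ord a) :
    ∃ m ∈ P.diffOps, a - s * m ≠ 0 → P.ord (a - s * m) < P.ord a := by
  set c := (P.leadCoeff s)⁻¹ * P.leadCoeff a
  set n := P.ord a - P.ord s
  have hc : c ≠ 0 :=
    mul_ne_zero (inv_ne_zero (P.leadCoeff_ne_zero hs0)) (P.leadCoeff_ne_zero ha0)
  have hm0 : P.monomial n c ≠ 0 := fun h =>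
    hc (by simpa [h, P.coeff_zero] using (P.coeff_monomial n c n).symm)
  refine ⟨_, P.monomial_mem_diffOps (by omega : 0 ≤ n) c, fun hne =>
    P.ord_sub_lt_of_leadCoeff_eq hne ?_ ?_⟩
  · rw [P.ord_mul hs0 hm0, P.ord_monomial hc]; ring
  · rw [P.leadCoeff_mul hs0 hm0, P.leadCoeff_monomial hc,
      mul_inv_cancel_left₀ (P.leadCoeff_ne_zero hs0)]

lemma exists_eq_mul_add {s a : P.carrier} (hs : s ∈ P.diffOps) (hs0 : s ≠ 0)
    (ha : a ∈ P.diffOps) :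
    ∃ q ∈ P.diffOps, ∃ r ∈ P.diffOps, a = s * q + r ∧ (r = 0 ∨ P.ord r < P.ord s) := by
  induction hn : (P.ord a).toNat using Nat.strong_induction_on generalizing a with
  | _ n ih =>
  by_cases hdone : a = 0 ∨ P.ord a < P.ord s
  · exact ⟨0, zero_mem _, a, ha, by rw [mul_zero, zero_add], hdone⟩
  push Not at hdone
  obtain ⟨m, hm, hred⟩ := P.exists_ord_sub_mul_lt hs0 hdone.1 hdone.2
  by_cases h0 : a - s * m = 0
  · exact ⟨m, hm, 0, zero_mem _, by rw [add_zero, ← sub_eq_zero, h0], Or.inl rfl⟩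
  have ha' : a - s * m ∈ P.diffOps := sub_mem ha (mul_mem hs hm)
  have hlt := hred h0
  have hpos := P.ord_nonneg ha' h0
  obtain ⟨q, hq, r, hr, heq, hr'⟩ := ih _ (by omega) ha' rfl
  exact ⟨m + q, add_mem hm hq, r, hr, by rw [mul_add, add_assoc, ← heq]; abel, hr'⟩

lemma isRightOre_diffOps : P.diffOps.IsRightOre := by
  intro a ha s hs hs0
  induction hn : (P.ord s).toNat using Nat.strong_induction_on generalizing a s with
  | _ n ih =>
  obtain ⟨q, hq, r, hr, rfl, hrem⟩ := P.exists_eq_mul_add hs hs0 ha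
  by_cases hr0 : r = 0
  · exact ⟨q, hq, 1, one_mem _, one_ne_zero, by rw [hr0, add_zero, mul_one]⟩
  have hlt := hrem.resolve_left hr0
  obtain ⟨b, hb, t, ht, ht0, hst⟩ :=
    ih _ (by have := P.ord_nonneg hr hr0; omega) s hs r hr hr0 rfl
  have hb0 : b ≠ 0 := by
    rintro rfl
    exact mul_ne_zero hs0 ht0 (by rw [hst, mul_zero])
  exact ⟨q * b + t, add_mem (mul_mem hq hb) ht, b, hb, hb0,
    by rw [add_mul, ← hst]; noncomm_ring⟩

/-- `approxInv X r` is `X⁻¹` truncated below `∂^(-ord X - r + 1)`: each step corrects the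
coefficient of `∂^(-r)` in `X * approxInv X r` through the leading coefficient of `X`. -/
noncomputable def approxInv (X : P.carrier) : ℕ → P.carrier
  | 0 => 0
  | r + 1 => approxInv X r + P.monomial (-P.ord X - r)
      ((P.leadCoeff X)⁻¹ * ((if r = 0 then 1 else 0) - P.coeff (X * approxInv X r) (-r)))

lemma coeff_mul_approxInv {X : P.carrier} (hX : X ≠ 0) (r : ℕ) {k : ℤ} (hk : -(r : ℤ) < k) :
    P.coeff (X * P.approxInv X r) k = if k = 0 then 1 else 0 := by
  induction r generalizing k with
  | zero => rw [approxInv, mul_zero, P.coeff_zero, if_neg (by omega)]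
  | succ r ih =>
    have hmon : ∀ (c : K) (n : ℤ), -P.ord X - r < n →
        P.coeff (P.monomial (-P.ord X - r) c) n = 0 :=
      fun c n hn => by rw [coeff_monomial, if_neg hn.ne']
    rw [approxInv, mul_add, P.coeff_add]
    rcases (show -(r : ℤ) < k ∨ k = -r by omega) with hk' | rfl
    · rw [ih hk', P.coeff_mul_of_add_lt (fun _ => P.coeff_eq_zero_of_ord_lt) (hmon _)
        (by omega), add_zero]
    · rw [P.coeff_mul_of_add_eq (fun _ => P.coeff_eq_zero_of_ord_lt) (hmon _) (by ring),
        coeff_monomial, if_pos rfl, ← leadCoeff,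
        mul_inv_cancel_left₀ (P.leadCoeff_ne_zero hX)]
      simp

lemma coeff_approxInv_of_le (X : P.carrier) {r r' : ℕ} (h : r ≤ r') {n : ℤ}
    (hn : -P.ord X - r < n) : P.coeff (P.approxInv X r') n = P.coeff (P.approxInv X r) n := by
  induction r', h using Nat.le_induction with
  | base => rfl
  | succ r' _ ih => rw [approxInv, P.coeff_add, ih, coeff_monomial, if_neg (by omega), add_zero]

lemma exists_mul_eq_one {X : P.carrier} (hX : X ≠ 0) : ∃ Y, X * Y = 1 := by
  set N := P.ord X
  have hbdd : ∀ n, -N < n → P.coeff (P.approxInv X ((-N - n).toNat + 1)) n = 0 := fun n hn => by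
    rw [P.coeff_approxInv_of_le X (Nat.zero_le _) (by omega), approxInv, P.coeff_zero]
  -- the coefficient of `∂ⁿ` is final from stage `(-N - n).toNat + 1` on
  obtain ⟨Y, hY⟩ := P.exists_of_coeffs _ ⟨-N, hbdd⟩
  have hY_sub : ∀ (r : ℕ) (n : ℤ), -N - r < n → P.coeff (Y - P.approxInv X r) n = 0 := by
    intro r n hn
    set s := (-N - n).toNat + 1
    rw [P.coeff_sub, hY, sub_eq_zero]
    change P.coeff (P.approxInv X s) n = _
    rw [← P.coeff_approxInv_of_le X (le_max_left s r) (by omega),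
      P.coeff_approxInv_of_le X (le_max_right s r) hn]
  refine ⟨Y, P.coeff_injective (funext fun k => ?_)⟩
  set r := (-k).toNat + 1
  rw [← add_sub_cancel (P.approxInv X r) Y, mul_add, P.coeff_add,
    P.coeff_mul_approxInv hX r (by omega),
    P.coeff_mul_of_add_lt (fun _ => P.coeff_eq_zero_of_ord_lt) (hY_sub r) (by omega),
    add_zero, P.coeff_one]

lemma isUnit_of_ne_zero {X : P.carrier} (hX : X ≠ 0) : IsUnit X := by
  obtain ⟨Y, hXY⟩ := P.exists_mul_eq_one hX
  obtain ⟨Z, hYZ⟩ := P.exists_mul_eq_one (right_ne_zero_of_mul_eq_one hXY)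
  have hXZ : X = Z := left_inv_eq_right_inv hXY hYZ
  exact ⟨⟨X, Y, hXY, by rw [hXZ, hYZ]⟩, rfl⟩

end Field

end PseudoDiffOps

theorem rightFractions_eq_rationalPseudoDiffOps_general {K : Type} [Field K]
    {δ : K → K} (P : PseudoDiffOps K δ) :
    P.IsSubskewfield P.rightFractions ∧
    {A : P.carrier | P.IsDiffOp A} ⊆ P.rightFractions ∧
    (∀ T : Set P.carrier, P.IsSubskewfield T → {A : P.carrier | P.IsDiffOp A} ⊆ T →
      P.rightFractions ⊆ T) := by
  rw [P.rightFractions_eq_diffOps_rightFractions, ← P.coe_diffOps]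
  have hunit : ∀ x : P.carrier, x ≠ 0 → IsUnit x := fun _ => P.isUnit_of_ne_zero
  have hOre := P.isRightOre_diffOps
  have hsub : (P.diffOps : Set P.carrier) ⊆ P.diffOps.rightFractions :=
    Subring.subset_rightFractions
  refine ⟨⟨hsub (zero_mem _), hsub (one_mem _), fun x hx y hy => ?_, fun x hx => ?_,
    fun x hx y hy => ?_, fun x hx hx0 => ?_⟩, hsub, fun T hT hDT => ?_⟩
  · exact Subring.add_mem_rightFractions hunit hOre hx hy
  · exact Subring.neg_mem_rightFractions hx
  · exact Subring.mul_mem_rightFractions hunit hOre hx hy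
  · exact Subring.exists_inv_mem_rightFractions hunit hx hx0
  · exact Subring.rightFractions_subset hT.2.2.2.2.1 hT.2.2.2.2.2 hDT

/-- the set of right fractions `{A S⁻¹ : A, S ∈ K[∂], S ≠ 0}` is a
subskewfield of `K((∂⁻¹))` and equals the smallest subskewfield of `K((∂⁻¹))`
containing `K[∂]`; in particular every rational pseudodifferential operator is a
right fraction. -/
theorem rightFractions_eq_rationalPseudoDiffOps {K : Type} [Field K] [CharZero K]
    {δ : K → K} (P : PseudoDiffOps K δ) :
    P.IsSubskewfield P.rightFractions ∧
    {A : P.carrier | P.IsDiffOp A} ⊆ P.rightFractions ∧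
    (∀ T : Set P.carrier, P.IsSubskewfield T → {A : P.carrier | P.IsDiffOp A} ⊆ T →
      P.rightFractions ⊆ T) :=
  rightFractions_eq_rationalPseudoDiffOps_general P
end

section
/- Let A = ℂ[a^{(n)}, b^{(n)}, d^{(n)} : n ∈ ℤ₊] / {ad − b²} be the differential domain obtained from the algebra of differential polynomials in a, b, d by quotienting by the differential ideal generated by ad − b². Then the element b a'/a of the fraction field of A (where a' = ∂a), i.e., the unique element x of Frac(A) with a·x = b·a', does not lie in A. -/
open MvPolynomial

/-- the algebra of differential polynomials `ℂ[a⁽ⁿ⁾, b⁽ⁿ⁾, d⁽ⁿ⁾ : n ∈ ℤ₊]`, with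
`a⁽ⁿ⁾ = X (0, n)`, `b⁽ⁿ⁾ = X (1, n)`, `d⁽ⁿ⁾ = X (2, n)` -/
noncomputable abbrev DPoly3 : Type := MvPolynomial (Fin 3 × ℕ) ℂ

/-- the derivation `∂` sending `x⁽ⁿ⁾` to `x⁽ⁿ⁺¹⁾` for `x = a, b, d` -/
noncomputable def dpoly3Der : Derivation ℂ DPoly3 DPoly3 :=
  MvPolynomial.mkDerivation ℂ (fun p : Fin 3 × ℕ => (X (p.1, p.2 + 1) : DPoly3))

/-- the differential ideal `{ad − b²}` generated by all `∂`-derivatives of `ad − b²` -/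
noncomputable def diffIdeal3 : Ideal DPoly3 :=
  Ideal.span (Set.range fun n : ℕ =>
    (⇑dpoly3Der)^[n] (X ((0 : Fin 3), 0) * X ((2 : Fin 3), 0) - X ((1 : Fin 3), 0) ^ 2))

/-- the differential domain `A = ℂ[a⁽ⁿ⁾, b⁽ⁿ⁾, d⁽ⁿ⁾]/{ad − b²}` -/
noncomputable abbrev DDomain3 : Type := DPoly3 ⧸ diffIdeal3

/-! Send `A` to the differential ring `(ℂ[ε]/ε²)[x]`, `∂ = d/dx`, by `a ↦ x`, `b ↦ ε`, `d ↦ 0`.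
This kills `ad − b² ↦ −ε² = 0`, hence, the map being differential, all of `{ad − b²}`.
If `b a'/a = y` lay in `A`, then `a y = b a'` would map to `x q = ε · 1` for some `q`,
impossible since `ε` is a nonzero constant coefficient. -/

namespace MvPolynomial

variable {R B σ ι : Type*} [CommSemiring R] [CommSemiring B] [Algebra R B]

theorem aeval_mkDerivation (D : Derivation R B B) (f : σ → MvPolynomial σ R) (v : σ → B)
    (hv : ∀ i, aeval v (f i) = D (v i)) (p : MvPolynomial σ R) :
    aeval v (mkDerivation R f p) = D (aeval v p) := by
  induction p using MvPolynomial.induction_on with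
  | C r => rw [← algebraMap_eq, Derivation.map_algebraMap, AlgHom.commutes,
      Derivation.map_algebraMap, map_zero]
  | add p q hp hq => simp only [map_add, hp, hq]
  | mul_X p i hp =>
    simp only [Derivation.leibniz, mkDerivation_X, smul_eq_mul, map_add, map_mul, aeval_X, hp,
      hv]

noncomputable def diffAeval (D : Derivation R B B) (w : ι → B) :
    MvPolynomial (ι × ℕ) R →ₐ[R] B :=
  aeval fun i => D^[i.2] (w i.1)

theorem diffAeval_iterate_mkDerivation (D : Derivation R B B) (w : ι → B) (n : ℕ)
    (p : MvPolynomial (ι × ℕ) R) :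
    diffAeval D w ((mkDerivation R fun i => X (i.1, i.2 + 1))^[n] p) = D^[n] (diffAeval D w p) :=
  have hv (i : ι × ℕ) : diffAeval D w (X (i.1, i.2 + 1)) = D (D^[i.2] (w i.1)) := by
    simp [diffAeval, Function.iterate_succ_apply']
  (Function.Semiconj.iterate_right (aeval_mkDerivation D _ _ hv) n).eq p

theorem span_iterate_mkDerivation_le_ker_diffAeval (D : Derivation R B B) (w : ι → B)
    {g : MvPolynomial (ι × ℕ) R} (hg : diffAeval D w g = 0) :
    Ideal.span (Set.range fun n => (mkDerivation R fun i => X (i.1, i.2 + 1))^[n] g) ≤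
      RingHom.ker (diffAeval D w) := by
  rw [Ideal.span_le]
  rintro _ ⟨n, rfl⟩
  rw [SetLike.mem_coe, RingHom.mem_ker, diffAeval_iterate_mkDerivation, hg,
    Function.iterate_fixed D.map_zero]

end MvPolynomial

open scoped DualNumber Polynomial

theorem DualNumber.eps_ne_zero {R : Type*} [MulZeroOneClass R] [Nontrivial R] :
    (ε : DualNumber R) ≠ 0 := fun h => by
  simpa using congrArg TrivSqZeroExt.snd h

noncomputable def dualSubst : DPoly3 →ₐ[ℂ] (DualNumber ℂ)[X] :=
  diffAeval (R := ℂ)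
    ((Polynomial.derivative' : Derivation (DualNumber ℂ) _ _).restrictScalars ℂ)
    ![Polynomial.X, Polynomial.C ε, 0]

theorem diffIdeal3_le_ker_dualSubst : diffIdeal3 ≤ RingHom.ker dualSubst :=
  span_iterate_mkDerivation_le_ker_diffAeval _ _ <| by
    rw [map_sub, map_mul, map_pow]
    simp [diffAeval, ← Polynomial.C_pow, DualNumber.eps_pow_two]

theorem dualSubst_a_mul_sub_b_mul_a' (p : DPoly3) :
    dualSubst (X ((0 : Fin 3), 0) * p - X ((1 : Fin 3), 0) * dpoly3Der (X ((0 : Fin 3), 0))) =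
      Polynomial.X * dualSubst p - Polynomial.C ε := by
  simp [dualSubst, diffAeval, dpoly3Der]

/-- in the differential domain `A = ℂ[a⁽ⁿ⁾, b⁽ⁿ⁾, d⁽ⁿ⁾]/{ad − b²}`,
the element `b a'/a` of `Frac(A)`, i.e. the unique `x ∈ Frac(A)` with `a·x = b·a'`,
does not lie in (the image of) `A`. -/
theorem ba'_div_a_not_mem : ∀ x : FractionRing DDomain3,
    algebraMap DDomain3 (FractionRing DDomain3)
        (Ideal.Quotient.mk diffIdeal3 (X ((0 : Fin 3), 0))) * x =
      algebraMap DDomain3 (FractionRing DDomain3)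
        (Ideal.Quotient.mk diffIdeal3
          (X ((1 : Fin 3), 0) * dpoly3Der (X ((0 : Fin 3), 0)))) →
    x ∉ Set.range (algebraMap DDomain3 (FractionRing DDomain3)) := by
  rintro x hx ⟨y, rfl⟩
  obtain ⟨p, rfl⟩ := Ideal.Quotient.mk_surjective y
  rw [← map_mul, ← map_mul, (IsFractionRing.injective _ _).eq_iff, Ideal.Quotient.eq] at hx
  have h := diffIdeal3_le_ker_dualSubst hx
  rw [RingHom.mem_ker, dualSubst_a_mul_sub_b_mul_a', sub_eq_zero] at h
  have hX : (Polynomial.X : (DualNumber ℂ)[X]) ∣ Polynomial.C ε := ⟨_, h.symm⟩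
  rw [Polynomial.X_dvd_iff, Polynomial.coeff_C_zero] at hX
  exact DualNumber.eps_ne_zero hX
end
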